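/- arXiv:1211.1401 — 6 statements merged into one kernel-verified Lean document; each statement's English description precedes it below -/
import Mathlib

section
/- Assume that g_n^2 ≠ b_n for every n ≥ 1. Then there exists a constant M > 0 (depending only on α, ε, λ, l) such that for all x, ξ ∈ [0,l] and all t ≥ 0 the series defining G(x,ξ,t) converges absolutely and |G(x,ξ,t)| ≤ M e^{−δ t}. -/
/-- γ_n = nπ/l -/
noncomputable def gamman (l : ℝ) (n : ℕ) : ℝ := n * Real.pi / l

/-- b_n = γ_n² + λ²/4 -/
noncomputable def bn (lm l : ℝ) (n : ℕ) : ℝ := (gamman l n) ^ 2 + lm ^ 2 / 4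

/-- g_n = (α + ε b_n)/2 -/
noncomputable def gn (α ε lm l : ℝ) (n : ℕ) : ℝ := (α + ε * bn lm l n) / 2

/-- G_n(t), defined by cases according to the sign of g_n² − b_n. -/
noncomputable def Gn (α ε lm l : ℝ) (n : ℕ) (t : ℝ) : ℝ :=
  if (gn α ε lm l n) ^ 2 > bn lm l n then
    Real.exp (-(gn α ε lm l n) * t) *
      Real.sinh (Real.sqrt ((gn α ε lm l n) ^ 2 - bn lm l n) * t) /
      Real.sqrt ((gn α ε lm l n) ^ 2 - bn lm l n)
  else if (gn α ε lm l n) ^ 2 = bn lm l n then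
    t * Real.exp (-(gn α ε lm l n) * t)
  else
    Real.exp (-(gn α ε lm l n) * t) *
      Real.sin (Real.sqrt (bn lm l n - (gn α ε lm l n) ^ 2) * t) /
      Real.sqrt (bn lm l n - (gn α ε lm l n) ^ 2)

/-- The Green function G(x,ξ,t) = (2/l) e^{λx/2} Σ_{n≥1} G_n(t) sin(γ_n ξ) sin(γ_n x). -/
noncomputable def GreenG (α ε lm l : ℝ) (x ξ t : ℝ) : ℝ :=
  (2 / l) * Real.exp (lm * x / 2) *
    ∑' n : ℕ, Gn α ε lm l (n + 1) t * Real.sin (gamman l (n + 1) * ξ) *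
      Real.sin (gamman l (n + 1) * x)

/-- a_λ = α + ελ²/4 -/
noncomputable def alam (α ε lm : ℝ) : ℝ := α + ε * lm ^ 2 / 4

/-- p_λ = π²/(επ² + a_λ l²) -/
noncomputable def plam (α ε lm l : ℝ) : ℝ :=
  Real.pi ^ 2 / (ε * Real.pi ^ 2 + alam α ε lm * l ^ 2)

/-- q_λ = (a_λ + ε(π/l)²)/2 -/
noncomputable def qlam (α ε lm l : ℝ) : ℝ :=
  (alam α ε lm + ε * (Real.pi / l) ^ 2) / 2

/-- δ = min(p_λ, q_λ) -/
noncomputable def dlt (α ε lm l : ℝ) : ℝ := min (plam α ε lm l) (qlam α ε lm l)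

noncomputable def Cf (α ε lm l : ℝ) (n : ℕ) : ℝ :=
  if (gn α ε lm l n) ^ 2 > bn lm l n then
    1 / (2 * Real.sqrt ((gn α ε lm l n) ^ 2 - bn lm l n))
  else 1 / Real.sqrt (bn lm l n - (gn α ε lm l n) ^ 2)

lemma Cf_nonneg (α ε lm l : ℝ) (n : ℕ) : 0 ≤ Cf α ε lm l n := by
  unfold Cf; split <;> positivity

lemma bn_pos (lm l : ℝ) (hlm : 0 < lm) (n : ℕ) : 0 < bn lm l n := by
  unfold bn
  nlinarith [sq_nonneg (gamman l n), pow_pos hlm 2]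

lemma bn_mono (lm l : ℝ) (hl : 0 < l) {n : ℕ} (hn : 1 ≤ n) : bn lm l 1 ≤ bn lm l n := by
  unfold bn gamman
  have h1 : (1:ℝ) ≤ (n:ℝ) := by exact_mod_cast hn
  have h3 : (1:ℝ) ≤ (n:ℝ) ^ 2 := by nlinarith
  have e1 : (((1:ℕ):ℝ) * Real.pi / l) ^ 2 = (Real.pi / l) ^ 2 := by norm_num
  have e2 : ((n:ℝ) * Real.pi / l) ^ 2 = (n:ℝ) ^ 2 * (Real.pi / l) ^ 2 := by ring
  nlinarith [mul_le_mul_of_nonneg_right h3 (sq_nonneg (Real.pi / l))]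

lemma bn_l_sq (lm l : ℝ) (hl : 0 < l) {n : ℕ} (hn : 1 ≤ n) :
    Real.pi ^ 2 ≤ bn lm l n * l ^ 2 := by
  have h1 : (1:ℝ) ≤ (n:ℝ) := by exact_mod_cast hn
  have h3 : (1:ℝ) ≤ (n:ℝ) ^ 2 := by nlinarith
  have hl' : l ≠ 0 := hl.ne'
  unfold bn gamman
  have hkey : ((n:ℝ) * Real.pi / l) ^ 2 * l ^ 2 = (n:ℝ) ^ 2 * Real.pi ^ 2 := by
    field_simp
  nlinarith [mul_le_mul_of_nonneg_right h3 (sq_nonneg Real.pi), sq_nonneg lm, sq_nonneg l,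
    mul_nonneg (mul_nonneg (sq_nonneg lm) (sq_nonneg l)) (by norm_num : (0:ℝ) ≤ 1/4)]

lemma qlam_eq (α ε lm l : ℝ) : qlam α ε lm l = gn α ε lm l 1 := by
  unfold qlam gn bn gamman alam
  push_cast
  ring

lemma dlt_le_gn (α ε lm l : ℝ) (hε : 0 < ε) (hl : 0 < l) {n : ℕ} (hn : 1 ≤ n) :
    dlt α ε lm l ≤ gn α ε lm l n := by
  have h1 : dlt α ε lm l ≤ qlam α ε lm l := min_le_right _ _
  rw [qlam_eq] at h1
  have h2 : gn α ε lm l 1 ≤ gn α ε lm l n := by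
    unfold gn
    have := bn_mono lm l hl hn
    nlinarith
  linarith

lemma key1 (α ε lm l : ℝ) (hα : 0 < α) (hε : 0 < ε) (hlm : 0 < lm) (hl : 0 < l)
    {n : ℕ} (hn : 1 ≤ n) :
    (α + ε * bn lm l n) * dlt α ε lm l ≤ bn lm l n := by
  have hb := bn_pos lm l hlm n
  have hbl := bn_l_sq lm l hl hn
  have hπ := Real.pi_pos
  have hD : 0 < ε * Real.pi ^ 2 + alam α ε lm * l ^ 2 := by
    unfold alam; positivity
  have h1 : dlt α ε lm l ≤ plam α ε lm l := min_le_left _ _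
  have h2 : (α + ε * bn lm l n) * plam α ε lm l ≤ bn lm l n := by
    unfold plam
    rw [← mul_div_assoc, div_le_iff₀ hD]
    unfold alam
    nlinarith [mul_le_mul_of_nonneg_left hbl hα.le,
      mul_nonneg (mul_pos hε hb).le (mul_nonneg (sq_nonneg lm) (sq_nonneg l))]
  have h3 : 0 < α + ε * bn lm l n := by positivity
  nlinarith
lemma Gn_le (α ε lm l : ℝ) (hα : 0 < α) (hε : 0 < ε) (hlm : 0 < lm) (hl : 0 < l)
    {n : ℕ} (hn : 1 ≤ n) (hnd : (gn α ε lm l n) ^ 2 ≠ bn lm l n)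
    {t : ℝ} (ht : 0 ≤ t) :
    |Gn α ε lm l n t| ≤ Cf α ε lm l n * Real.exp (-(dlt α ε lm l) * t) := by
  have hb := bn_pos lm l hlm n
  have hδg := dlt_le_gn α ε lm l hε hl hn
  have hkey := key1 α ε lm l hα hε hlm hl hn
  have h2g : 2 * gn α ε lm l n = α + ε * bn lm l n := by unfold gn; ring
  unfold Gn Cf
  set g := gn α ε lm l n with hgdef
  set b := bn lm l n with hbdef
  set δ := dlt α ε lm l with hδdef
  have h2gδ : 2 * g * δ ≤ b := by
    have he : 2 * g * δ = (α + ε * b) * δ := by rw [h2g]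
    linarith [he.le, he.ge]
  rcases lt_trichotomy (g ^ 2) b with hlt | heq | h1
  case inr.inl => exact absurd heq hnd
  case inl =>
    -- oscillatory case
    have h1' : ¬ (g ^ 2 > b) := by simp only [gt_iff_lt, not_lt]; exact hlt.le
    simp only [if_neg h1', if_neg hnd]
    have hν2 : 0 < b - g ^ 2 := by linarith
    set ν := Real.sqrt (b - g ^ 2) with hνdef
    have hνpos : 0 < ν := Real.sqrt_pos.mpr hν2
    rw [abs_div, abs_mul, abs_of_nonneg (Real.exp_pos _).le, abs_of_nonneg hνpos.le]
    rw [div_le_iff₀ hνpos]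
    have hrhs : 1 / ν * Real.exp (-δ * t) * ν = Real.exp (-δ * t) := by field_simp
    rw [hrhs]
    have hs : |Real.sin (ν * t)| ≤ 1 := Real.abs_sin_le_one _
    have he : Real.exp (-g * t) ≤ Real.exp (-δ * t) :=
      Real.exp_le_exp.mpr (by nlinarith [mul_le_mul_of_nonneg_right hδg ht])
    calc Real.exp (-g * t) * |Real.sin (ν * t)| ≤ Real.exp (-g * t) * 1 :=
          mul_le_mul_of_nonneg_left hs (Real.exp_pos _).le
      _ = Real.exp (-g * t) := mul_one _
      _ ≤ Real.exp (-δ * t) := he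
  case inr.inr =>
    -- hyperbolic case
    simp only [if_pos h1]
    have hω2 : 0 < g ^ 2 - b := by linarith
    set ω := Real.sqrt (g ^ 2 - b) with hωdef
    have hωpos : 0 < ω := Real.sqrt_pos.mpr hω2
    have hgδ : 0 ≤ g - δ := by linarith
    have hωle : ω ≤ g - δ := by
      have hsq : g ^ 2 - b ≤ (g - δ) ^ 2 := by nlinarith [sq_nonneg δ]
      calc ω ≤ Real.sqrt ((g - δ) ^ 2) := Real.sqrt_le_sqrt hsq
        _ = g - δ := Real.sqrt_sq hgδ
    have hωt : 0 ≤ ω * t := mul_nonneg hωpos.le ht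
    have hsinh0 : 0 ≤ Real.sinh (ω * t) := by
      rw [Real.sinh_eq]
      have : Real.exp (-(ω * t)) ≤ Real.exp (ω * t) := Real.exp_le_exp.mpr (by linarith)
      linarith
    have hsinh : Real.sinh (ω * t) ≤ Real.exp (ω * t) / 2 := by
      rw [Real.sinh_eq]
      have := Real.exp_pos (-(ω * t))
      linarith
    rw [abs_of_nonneg (div_nonneg (mul_nonneg (Real.exp_pos _).le hsinh0) hωpos.le)]
    rw [div_le_iff₀ hωpos]
    have hrhs : 1 / (2 * ω) * Real.exp (-δ * t) * ω = Real.exp (-δ * t) / 2 := by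
      field_simp
    rw [hrhs]
    have hc1 : Real.exp (-g * t) * Real.sinh (ω * t) ≤
        Real.exp (-g * t) * (Real.exp (ω * t) / 2) :=
      mul_le_mul_of_nonneg_left hsinh (Real.exp_pos _).le
    have hc2 : Real.exp (-g * t) * (Real.exp (ω * t) / 2) = Real.exp ((ω - g) * t) / 2 := by
      rw [show (ω - g) * t = -g * t + ω * t by ring, Real.exp_add]
      ring
    have hc3 : Real.exp ((ω - g) * t) ≤ Real.exp (-δ * t) :=
      Real.exp_le_exp.mpr (by nlinarith [mul_le_mul_of_nonneg_right hωle ht])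
    linarith


lemma Cf_le (α ε lm l : ℝ) (hα : 0 < α) (hε : 0 < ε) (hlm : 0 < lm) (hl : 0 < l)
    (m : ℕ) (c : ℝ) (hc : 0 < c) (h8 : 8 / ε ^ 2 ≤ bn lm l m) (hcb : c ≤ bn lm l m) :
    Cf α ε lm l m ≤ 3 / (2 * ε * c) := by
  have hb := bn_pos lm l hlm m
  have hε2b : 8 ≤ ε ^ 2 * bn lm l m := by
    rw [div_le_iff₀ (pow_pos hε 2)] at h8; linarith
  have hgb : ε * bn lm l m / 2 ≤ gn α ε lm l m := by unfold gn; linarith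
  have hgpos : 0 < gn α ε lm l m := by unfold gn; linarith [mul_pos hε hb]
  have hsq := mul_le_mul hgb hgb (by positivity) hgpos.le
  have hcube := mul_le_mul_of_nonneg_right hε2b hb.le
  have hhyp : bn lm l m < (gn α ε lm l m) ^ 2 := by nlinarith
  have hω3 : ε * bn lm l m / 3 ≤ Real.sqrt ((gn α ε lm l m) ^ 2 - bn lm l m) := by
    rw [Real.le_sqrt (by positivity) (by linarith)]
    nlinarith
  have hωc : ε * c / 3 ≤ Real.sqrt ((gn α ε lm l m) ^ 2 - bn lm l m) := by
    refine le_trans ?_ hω3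
    have := mul_le_mul_of_nonneg_left hcb hε.le
    linarith
  unfold Cf
  rw [if_pos hhyp]
  calc 1 / (2 * Real.sqrt ((gn α ε lm l m) ^ 2 - bn lm l m))
      ≤ 1 / (2 * (ε * c / 3)) :=
        one_div_le_one_div_of_le (by positivity) (by linarith)
    _ = 3 / (2 * ε * c) := by
        rw [div_eq_div_iff (by positivity) (by positivity)]
        ring

lemma Cf_summable (α ε lm l : ℝ) (hα : 0 < α) (hε : 0 < ε) (hlm : 0 < lm) (hl : 0 < l) :
    Summable (Cf α ε lm l) := by
  have hπ := Real.pi_pos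
  obtain ⟨N, hN1, hNv⟩ : ∃ N : ℕ, 1 ≤ N ∧ 8 / ε ^ 2 * (l / Real.pi) ^ 2 ≤ (N:ℝ) := by
    refine ⟨⌈8 / ε ^ 2 * (l / Real.pi) ^ 2⌉₊ + 1, Nat.le_add_left 1 _, ?_⟩
    push_cast
    linarith [Nat.le_ceil (8 / ε ^ 2 * (l / Real.pi) ^ 2)]
  rw [← summable_nat_add_iff N]
  have hsum : Summable (fun k : ℕ =>
      3 * l ^ 2 / (2 * ε * Real.pi ^ 2) * (1 / ((k:ℝ) + 1) ^ 2)) := by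
    apply Summable.mul_left
    have h0 : Summable (fun n : ℕ => 1 / (n:ℝ) ^ 2) :=
      (Real.summable_one_div_nat_pow).mpr one_lt_two
    refine ((summable_nat_add_iff 1).mpr h0).congr fun k => ?_
    push_cast
    ring
  refine Summable.of_nonneg_of_le (fun k => Cf_nonneg α ε lm l _) (fun k => ?_) hsum
  have hk0 : (0:ℝ) ≤ (k:ℝ) := Nat.cast_nonneg k
  have hN1' : (1:ℝ) ≤ (N:ℝ) := by exact_mod_cast hN1
  have hmcast : ((k + N : ℕ):ℝ) = (k:ℝ) + (N:ℝ) := by push_cast; ring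
  have hbge : ∀ c : ℝ, c ≤ ((k + N:ℕ):ℝ) ^ 2 → c * (Real.pi / l) ^ 2 ≤ bn lm l (k + N) := by
    intro c hcm
    unfold bn gamman
    have h1 := mul_le_mul_of_nonneg_right hcm (sq_nonneg (Real.pi / l))
    have h4 : (((k + N:ℕ)):ℝ) ^ 2 * (Real.pi / l) ^ 2
        = (((k + N:ℕ):ℝ) * Real.pi / l) ^ 2 := by ring
    have h5 : c * (Real.pi / l) ^ 2 ≤ (((k + N:ℕ):ℝ) * Real.pi / l) ^ 2 := by
      rw [← h4]; exact h1
    nlinarith [sq_nonneg lm]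
  have h8 : 8 / ε ^ 2 ≤ bn lm l (k + N) := by
    have hv2 : 8 / ε ^ 2 * (l / Real.pi) ^ 2 ≤ ((k + N:ℕ):ℝ) ^ 2 := by
      rw [hmcast]; nlinarith
    have hb2 := hbge _ hv2
    have h1 : (l / Real.pi) ^ 2 * (Real.pi / l) ^ 2 = 1 := by
      rw [div_pow, div_pow, div_mul_div_comm]
      rw [div_eq_one_iff_eq (by positivity)]
      ring
    have hid : 8 / ε ^ 2 * (l / Real.pi) ^ 2 * (Real.pi / l) ^ 2 = 8 / ε ^ 2 := by
      calc 8 / ε ^ 2 * (l / Real.pi) ^ 2 * (Real.pi / l) ^ 2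
          = 8 / ε ^ 2 * ((l / Real.pi) ^ 2 * (Real.pi / l) ^ 2) := by ring
        _ = 8 / ε ^ 2 := by rw [h1, mul_one]
    linarith [hid.le, hid.ge]
  have hck : ((k:ℝ) + 1) ^ 2 ≤ ((k + N:ℕ):ℝ) ^ 2 := by
    rw [hmcast]; nlinarith
  have hcb := hbge _ hck
  have hc : (0:ℝ) < ((k:ℝ) + 1) ^ 2 * (Real.pi / l) ^ 2 := by positivity
  have hle := Cf_le α ε lm l hα hε hlm hl (k + N) _ hc h8 hcb
  refine hle.trans (le_of_eq ?_)
  have hk1 : ((k:ℝ) + 1) ≠ 0 := by positivity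
  rw [mul_one_div, div_div]
  rw [div_eq_div_iff (by positivity) (by positivity)]
  field_simp

/-- Assuming g_n² ≠ b_n for every n ≥ 1, there is a constant M > 0
(depending only on α, ε, λ, l) such that for all x, ξ ∈ [0,l] and t ≥ 0 the series
defining G(x,ξ,t) converges absolutely and |G(x,ξ,t)| ≤ M e^{−δ t}. -/
theorem stmt0 (α ε lm l : ℝ) (hα : 0 < α) (hε : 0 < ε) (hlm : 0 < lm) (hl : 0 < l)
    (hnd : ∀ n : ℕ, 1 ≤ n → (gn α ε lm l n) ^ 2 ≠ bn lm l n) :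
    ∃ M > 0, ∀ x ∈ Set.Icc (0 : ℝ) l, ∀ ξ ∈ Set.Icc (0 : ℝ) l, ∀ t : ℝ, 0 ≤ t →
      Summable (fun n : ℕ =>
        |Gn α ε lm l (n + 1) t * Real.sin (gamman l (n + 1) * ξ) *
          Real.sin (gamman l (n + 1) * x)|) ∧
      |GreenG α ε lm l x ξ t| ≤ M * Real.exp (-(dlt α ε lm l) * t) := by
  have hsumC : Summable (fun n : ℕ => Cf α ε lm l (n + 1)) :=
    (summable_nat_add_iff 1).mpr (Cf_summable α ε lm l hα hε hlm hl)
  set S := ∑' n : ℕ, Cf α ε lm l (n + 1) with hS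
  have hS0 : 0 ≤ S := tsum_nonneg fun n => Cf_nonneg α ε lm l _
  refine ⟨2 / l * Real.exp (lm * l / 2) * S + 1, by positivity, ?_⟩
  intro x hx ξ hξ t ht
  have hterm : ∀ n : ℕ,
      |Gn α ε lm l (n + 1) t * Real.sin (gamman l (n + 1) * ξ) *
        Real.sin (gamman l (n + 1) * x)|
      ≤ Cf α ε lm l (n + 1) * Real.exp (-(dlt α ε lm l) * t) := by
    intro n
    have h1 := Gn_le α ε lm l hα hε hlm hl (n := n + 1) (Nat.le_add_left 1 n)
      (hnd (n + 1) (Nat.le_add_left 1 n)) ht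
    have hs1 : |Real.sin (gamman l (n + 1) * ξ)| ≤ 1 := Real.abs_sin_le_one _
    have hs2 : |Real.sin (gamman l (n + 1) * x)| ≤ 1 := Real.abs_sin_le_one _
    have hCe : 0 ≤ Cf α ε lm l (n + 1) * Real.exp (-(dlt α ε lm l) * t) :=
      mul_nonneg (Cf_nonneg α ε lm l _) (Real.exp_pos _).le
    calc |Gn α ε lm l (n + 1) t * Real.sin (gamman l (n + 1) * ξ) *
          Real.sin (gamman l (n + 1) * x)|
        = |Gn α ε lm l (n + 1) t| * |Real.sin (gamman l (n + 1) * ξ)| *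
          |Real.sin (gamman l (n + 1) * x)| := by rw [abs_mul, abs_mul]
      _ ≤ Cf α ε lm l (n + 1) * Real.exp (-(dlt α ε lm l) * t) * 1 * 1 := by
          apply mul_le_mul _ hs2 (abs_nonneg _) (mul_nonneg hCe zero_le_one)
          exact mul_le_mul h1 hs1 (abs_nonneg _) hCe
      _ = Cf α ε lm l (n + 1) * Real.exp (-(dlt α ε lm l) * t) := by ring
  have hsumE : Summable (fun n : ℕ =>
      Cf α ε lm l (n + 1) * Real.exp (-(dlt α ε lm l) * t)) := hsumC.mul_right _
  have hsumT : Summable (fun n : ℕ =>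
      |Gn α ε lm l (n + 1) t * Real.sin (gamman l (n + 1) * ξ) *
        Real.sin (gamman l (n + 1) * x)|) :=
    Summable.of_nonneg_of_le (fun n => abs_nonneg _) hterm hsumE
  refine ⟨hsumT, ?_⟩
  have htsum1 : |∑' n : ℕ, Gn α ε lm l (n + 1) t * Real.sin (gamman l (n + 1) * ξ) *
        Real.sin (gamman l (n + 1) * x)|
      ≤ ∑' n : ℕ, |Gn α ε lm l (n + 1) t * Real.sin (gamman l (n + 1) * ξ) *
        Real.sin (gamman l (n + 1) * x)| := by
    have h := norm_tsum_le_tsum_norm (f := fun n : ℕ =>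
      Gn α ε lm l (n + 1) t * Real.sin (gamman l (n + 1) * ξ) *
        Real.sin (gamman l (n + 1) * x)) (by simpa only [Real.norm_eq_abs] using hsumT)
    simpa only [Real.norm_eq_abs] using h
  have htsum2 : ∑' n : ℕ, |Gn α ε lm l (n + 1) t * Real.sin (gamman l (n + 1) * ξ) *
        Real.sin (gamman l (n + 1) * x)|
      ≤ ∑' n : ℕ, Cf α ε lm l (n + 1) * Real.exp (-(dlt α ε lm l) * t) :=
    Summable.tsum_le_tsum hterm hsumT hsumE
  have htsum3 : ∑' n : ℕ, Cf α ε lm l (n + 1) * Real.exp (-(dlt α ε lm l) * t)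
      = S * Real.exp (-(dlt α ε lm l) * t) := tsum_mul_right
  have h9 : |∑' n : ℕ, Gn α ε lm l (n + 1) t * Real.sin (gamman l (n + 1) * ξ) *
        Real.sin (gamman l (n + 1) * x)| ≤ S * Real.exp (-(dlt α ε lm l) * t) :=
    htsum1.trans (htsum2.trans htsum3.le)
  have hexp : Real.exp (lm * x / 2) ≤ Real.exp (lm * l / 2) :=
    Real.exp_le_exp.mpr (by nlinarith [hx.2, hlm.le])
  unfold GreenG
  rw [abs_mul, abs_mul]
  rw [abs_of_pos (by positivity : (0:ℝ) < 2 / l), abs_of_pos (Real.exp_pos _)]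
  have hE := Real.exp_pos (-(dlt α ε lm l) * t)
  have h10 : 2 / l * Real.exp (lm * x / 2) *
        |∑' n : ℕ, Gn α ε lm l (n + 1) t * Real.sin (gamman l (n + 1) * ξ) *
          Real.sin (gamman l (n + 1) * x)|
      ≤ 2 / l * Real.exp (lm * l / 2) * (S * Real.exp (-(dlt α ε lm l) * t)) := by
    apply mul_le_mul _ h9 (abs_nonneg _) (by positivity)
    apply mul_le_mul_of_nonneg_left hexp (by positivity)
  have h11 : 2 / l * Real.exp (lm * l / 2) * (S * Real.exp (-(dlt α ε lm l) * t))
      ≤ (2 / l * Real.exp (lm * l / 2) * S + 1) * Real.exp (-(dlt α ε lm l) * t) := by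
    nlinarith [hE, mul_nonneg (by positivity : (0:ℝ) ≤ 2 / l * Real.exp (lm * l / 2)) hS0]
  linarith
end

section
/- For every integer n ≥ 1 such that g_n^2 > b_n, one has g_n − √(g_n^2 − b_n) ≥ p_λ, where p_λ = π^2/(επ^2 + a_λ l^2) and a_λ = α + ελ^2/4. -/
/-- For every integer n ≥ 1 such that g_n² > b_n, one has
g_n − √(g_n² − b_n) ≥ p_λ. -/
theorem stmt4 (α ε lm l : ℝ) (hα : 0 < α) (hε : 0 < ε) (hlm : 0 < lm) (hl : 0 < l) :
    ∀ n : ℕ, 1 ≤ n → (gn α ε lm l n) ^ 2 > bn lm l n →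
      plam α ε lm l ≤ gn α ε lm l n - Real.sqrt ((gn α ε lm l n) ^ 2 - bn lm l n) := by
  intro n hn hgb
  have hπ := Real.pi_pos
  have hn1 : (1:ℝ) ≤ (n:ℝ) := by exact_mod_cast hn
  have hbge : Real.pi ^ 2 / l ^ 2 + lm ^ 2 / 4 ≤ bn lm l n := by
    unfold bn gamman
    have h1 : Real.pi / l ≤ (n:ℝ) * Real.pi / l := by
      gcongr
      nlinarith
    have h2 : (Real.pi / l) ^ 2 ≤ ((n:ℝ) * Real.pi / l) ^ 2 := by
      apply pow_le_pow_left₀ (by positivity) h1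
    have : (Real.pi / l) ^ 2 = Real.pi ^ 2 / l ^ 2 := by ring
    linarith
  have hbpos : 0 < bn lm l n := by
    have hpl : 0 < Real.pi ^ 2 / l ^ 2 := by positivity
    nlinarith [sq_nonneg lm]
  have hgpos : 0 < gn α ε lm l n := by
    unfold gn; nlinarith
  set g := gn α ε lm l n with hg
  set b := bn lm l n with hb
  have hsnn := Real.sqrt_nonneg (g ^ 2 - b)
  have hs2 : Real.sqrt (g ^ 2 - b) ^ 2 = g ^ 2 - b := Real.sq_sqrt (by linarith)
  have hs : Real.sqrt (g ^ 2 - b) ≤ g := by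
    nlinarith
  have key : b / (2 * g) ≤ g - Real.sqrt (g ^ 2 - b) := by
    rw [div_le_iff₀ (by linarith)]
    nlinarith
  have hD : 0 < ε * Real.pi ^ 2 + alam α ε lm * l ^ 2 := by
    unfold alam; positivity
  have hp : plam α ε lm l ≤ b / (2 * g) := by
    unfold plam alam
    rw [div_le_div_iff₀ (by positivity) (by linarith : (0:ℝ) < 2 * g)]
    have h2g : 2 * g = α + ε * b := by rw [hg]; unfold gn; ring
    rw [h2g]
    have hbl : Real.pi ^ 2 ≤ b * l ^ 2 := by
      have h0 := mul_le_mul_of_nonneg_right hbge (sq_nonneg l)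
      have h1 : (Real.pi ^ 2 / l ^ 2 + lm ^ 2 / 4) * l ^ 2
          = Real.pi ^ 2 + lm ^ 2 * l ^ 2 / 4 := by field_simp
      nlinarith [sq_nonneg (lm * l)]
    nlinarith [mul_le_mul_of_nonneg_left hbl hα.le,
      mul_nonneg (mul_nonneg hbpos.le (sq_nonneg l)) (by positivity : (0:ℝ) ≤ ε * lm ^ 2 / 4),
      mul_pos hε hbpos]
  linarith
end

section
/- For every integer n ≥ 1 and every t ≥ 0: if g_n^2 < b_n then |G_n(t)| ≤ t e^{−q_λ t}, while if g_n^2 > b_n then |G_n(t)| ≤ (1/(2ω_n)) e^{−p_λ t}, where ω_n = √(g_n^2 − b_n). -/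
set_option maxHeartbeats 800000 in
/-- For every n ≥ 1 and t ≥ 0: if g_n² < b_n then |G_n(t)| ≤ t e^{−q_λ t},
while if g_n² > b_n then |G_n(t)| ≤ (1/(2ω_n)) e^{−p_λ t} with ω_n = √(g_n² − b_n). -/
theorem stmt5 (α ε lm l : ℝ) (hα : 0 < α) (hε : 0 < ε) (hlm : 0 < lm) (hl : 0 < l) :
    ∀ n : ℕ, 1 ≤ n → ∀ t : ℝ, 0 ≤ t →
      ((gn α ε lm l n) ^ 2 < bn lm l n →
        |Gn α ε lm l n t| ≤ t * Real.exp (-(qlam α ε lm l) * t)) ∧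
      ((gn α ε lm l n) ^ 2 > bn lm l n →
        |Gn α ε lm l n t| ≤
          (1 / (2 * Real.sqrt ((gn α ε lm l n) ^ 2 - bn lm l n))) *
            Real.exp (-(plam α ε lm l) * t)) := by
  intro n hn t ht
  have hπ := Real.pi_pos
  have h1n : (1:ℝ) ≤ (n:ℝ) := by exact_mod_cast hn
  have hx : 0 < Real.pi / l := by positivity
  have hb : (Real.pi / l) ^ 2 + lm ^ 2 / 4 ≤ bn lm l n := by
    unfold bn gamman
    have e : (n : ℝ) * Real.pi / l = (n : ℝ) * (Real.pi / l) := by ring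
    rw [e]
    have h2 : Real.pi / l ≤ (n:ℝ) * (Real.pi / l) := le_mul_of_one_le_left hx.le h1n
    nlinarith [pow_le_pow_left₀ hx.le h2 2]
  have hb0 : 0 < bn lm l n := lt_of_lt_of_le (by positivity) hb
  have hg0 : 0 < gn α ε lm l n := by
    unfold gn; nlinarith [mul_pos hε hb0]
  have h2g : 2 * gn α ε lm l n = α + ε * bn lm l n := by unfold gn; ring
  have hq : qlam α ε lm l ≤ gn α ε lm l n := by
    unfold qlam alam
    nlinarith [mul_le_mul_of_nonneg_left hb hε.le]
  constructor
  · intro hlt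
    have hνpos : (0:ℝ) < bn lm l n - gn α ε lm l n ^ 2 := by linarith
    have hν : 0 < Real.sqrt (bn lm l n - gn α ε lm l n ^ 2) :=
      Real.sqrt_pos.mpr hνpos
    set ν := Real.sqrt (bn lm l n - gn α ε lm l n ^ 2) with hνdef
    unfold Gn
    rw [if_neg (by push_neg; linarith), if_neg (by linarith)]
    rw [abs_div, abs_mul, Real.abs_exp, ← hνdef, abs_of_pos hν]
    have hsin : |Real.sin (ν * t)| ≤ ν * t := by
      calc |Real.sin (ν * t)| ≤ |ν * t| := Real.abs_sin_le_abs
        _ = ν * t := abs_of_nonneg (by positivity)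
    calc Real.exp (-gn α ε lm l n * t) * |Real.sin (ν * t)| / ν
        ≤ Real.exp (-gn α ε lm l n * t) * (ν * t) / ν := by gcongr
      _ = t * Real.exp (-gn α ε lm l n * t) := by field_simp
      _ ≤ t * Real.exp (-qlam α ε lm l * t) := by
          gcongr
  · intro hgt
    have hωpos : (0:ℝ) < gn α ε lm l n ^ 2 - bn lm l n := by linarith
    have hω : 0 < Real.sqrt (gn α ε lm l n ^ 2 - bn lm l n) :=
      Real.sqrt_pos.mpr hωpos
    set ω := Real.sqrt (gn α ε lm l n ^ 2 - bn lm l n) with hωdef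
    have hω2 : ω ^ 2 = gn α ε lm l n ^ 2 - bn lm l n := Real.sq_sqrt hωpos.le
    have hωg : ω < gn α ε lm l n := by nlinarith
    have hD : 0 < ε * Real.pi ^ 2 + alam α ε lm * l ^ 2 := by
      unfold alam; positivity
    have hp0 : 0 < plam α ε lm l := by unfold plam; positivity
    have hπl : (Real.pi / l) ^ 2 * l ^ 2 = Real.pi ^ 2 := by field_simp
    have ha : α ≤ alam α ε lm := by unfold alam; nlinarith
    have hbπ : Real.pi ^ 2 ≤ bn lm l n * l ^ 2 := by nlinarith [sq_nonneg lm]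
    have hkey : plam α ε lm l * (2 * gn α ε lm l n) ≤ bn lm l n := by
      unfold plam
      rw [div_mul_eq_mul_div, div_le_iff₀ hD]
      have h1 : Real.pi ^ 2 * α ≤ bn lm l n * (alam α ε lm * l ^ 2) := by
        calc Real.pi ^ 2 * α ≤ (bn lm l n * l ^ 2) * alam α ε lm :=
              mul_le_mul hbπ ha hα.le (by positivity)
          _ = bn lm l n * (alam α ε lm * l ^ 2) := by ring
      rw [h2g]
      nlinarith [h1]
    have hp : plam α ε lm l ≤ gn α ε lm l n - ω := by
      nlinarith [hω.le, hp0.le]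
    unfold Gn
    rw [if_pos hgt, ← hωdef]
    have hsh : 0 ≤ Real.sinh (ω * t) := by
      rw [Real.sinh_nonneg_iff]; positivity
    rw [abs_div, abs_mul, Real.abs_exp, abs_of_nonneg hsh, abs_of_pos hω]
    have hkey2 : Real.exp (-gn α ε lm l n * t) * Real.sinh (ω * t) ≤
        Real.exp (-plam α ε lm l * t) / 2 := by
      rw [Real.sinh_eq]
      have h3 : Real.exp (-gn α ε lm l n * t) * Real.exp (ω * t) ≤
          Real.exp (-plam α ε lm l * t) := by
        rw [← Real.exp_add, Real.exp_le_exp]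
        nlinarith
      nlinarith [Real.exp_pos (-(ω * t)), Real.exp_pos (-gn α ε lm l n * t)]
    calc Real.exp (-gn α ε lm l n * t) * Real.sinh (ω * t) / ω
        ≤ (Real.exp (-plam α ε lm l * t) / 2) / ω := by gcongr
      _ = (1 / (2 * ω)) * Real.exp (-plam α ε lm l * t) := by
          field_simp
end

section
/- Let I ⊆ ℝ be an open interval, f : I → ℝ differentiable, and define U(ξ) = 4 arctan(e^{f(ξ)}). Then U satisfies U'(ξ) = sin U(ξ) − γ on I if and only if f satisfies f'(ξ) = −(tanh f(ξ) + (γ/2) cosh f(ξ)) on I. -/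
/-!
Since `2 arctan (exp y) - π/2` is the Gudermannian of `y`, `sin (2 arctan (exp y)) = sech y` and
`cos (2 arctan (exp y)) = -tanh y`. Hence `U' = 2 f' sech f` and `sin U = -2 tanh f sech f`, and
dividing `U' = sin U - γ` by `2 sech f > 0` turns it into the equation for `f`.
-/

open Real

namespace Real

theorem sin_two_mul_arctan (t : ℝ) : sin (2 * arctan t) = 2 * t / (1 + t ^ 2) := by
  have hcos : cos (arctan t) ≠ 0 := (cos_arctan_pos t).ne'
  have htan : sin (arctan t) = t * cos (arctan t) := by
    rw [← div_eq_iff hcos, ← tan_eq_sin_div_cos, tan_arctan]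
  rw [sin_two_mul, htan, show 2 * (t * cos (arctan t)) * cos (arctan t) =
    2 * t * cos (arctan t) ^ 2 by ring, cos_sq_arctan]
  ring

theorem cos_two_mul_arctan (t : ℝ) : cos (2 * arctan t) = (1 - t ^ 2) / (1 + t ^ 2) := by
  rw [cos_two_mul, cos_sq_arctan]
  field_simp
  ring

theorem exp_div_one_add_exp_sq (y : ℝ) : exp y / (1 + exp y ^ 2) = (2 * cosh y)⁻¹ := by
  rw [cosh_eq, exp_neg]
  field_simp
  ring

theorem sin_two_mul_arctan_exp (y : ℝ) : sin (2 * arctan (exp y)) = (cosh y)⁻¹ := by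
  rw [sin_two_mul_arctan, mul_div_assoc, exp_div_one_add_exp_sq]
  field_simp

theorem cos_two_mul_arctan_exp (y : ℝ) : cos (2 * arctan (exp y)) = -tanh y := by
  rw [cos_two_mul_arctan, tanh_eq, exp_neg]
  field_simp
  ring

theorem sin_four_mul_arctan_exp (y : ℝ) :
    sin (4 * arctan (exp y)) = -2 * tanh y / cosh y := by
  rw [show 4 * arctan (exp y) = 2 * (2 * arctan (exp y)) by ring, sin_two_mul,
    sin_two_mul_arctan_exp, cos_two_mul_arctan_exp]
  ring

end Real

theorem HasDerivAt.arctan_exp {f : ℝ → ℝ} {f' x : ℝ} (hf : HasDerivAt f f' x) :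
    HasDerivAt (fun x ↦ Real.arctan (Real.exp (f x))) (f' / (2 * Real.cosh (f x))) x := by
  convert hf.exp.arctan using 1
  rw [div_eq_mul_inv, ← exp_div_one_add_exp_sq]
  ring

/-- Let I = (a,b) be an open interval, f : I → ℝ differentiable and
U(ξ) = 4 arctan(e^{f(ξ)}). Then U' = sin U − γ on I iff
f' = −(tanh f + (γ/2) cosh f) on I. -/
theorem stmt10 (γ a b : ℝ) (f : ℝ → ℝ)
    (hf : ∀ ξ ∈ Set.Ioo a b, DifferentiableAt ℝ f ξ)
    (U : ℝ → ℝ) (hU : ∀ ξ : ℝ, U ξ = 4 * Real.arctan (Real.exp (f ξ))) :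
    (∀ ξ ∈ Set.Ioo a b, deriv U ξ = Real.sin (U ξ) - γ) ↔
    (∀ ξ ∈ Set.Ioo a b, deriv f ξ = -(Real.tanh (f ξ) + γ / 2 * Real.cosh (f ξ))) := by
  obtain rfl : U = fun ξ ↦ 4 * arctan (exp (f ξ)) := funext hU
  refine forall₂_congr fun ξ hξ ↦ ?_
  have hU' := (HasDerivAt.arctan_exp (hf ξ hξ).hasDerivAt).const_mul 4
  rw [hU'.deriv, sin_four_mul_arctan_exp]
  constructor <;> intro h
  · field_simp at h
    linear_combination h / 4
  · rw [h]
    field_simp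
    ring
end

section
/- Let I ⊆ ℝ be an open interval, y : I → ℝ differentiable, and define U(ξ) = 4 arctan(y(ξ) + √(y(ξ)² + 1)). Then U satisfies U'(ξ) = sin U(ξ) − γ on I if and only if y satisfies the Riccati equation y'(ξ) = −(y(ξ) + (γ/2)(1 + y(ξ)²)) on I. -/
/-!
Write `U = K ∘ y` with `K x = 4 arctan (x + √(x² + 1))`. Since `w = x + √(x² + 1)` satisfies
`1 + w² = 2 w √(x² + 1)` and `1 - w² = -2 x w`, one finds `K' x = 2 / (x² + 1)` and
`sin (K x) = -2 x / (x² + 1)`. Hence `U' = sin U - γ` reads `2 y' / (y² + 1) = -2 y / (y² + 1) - γ`,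
which is the Riccati equation multiplied by `2 / (y² + 1)`.
-/

open Real

lemma sin_four_mul_arctan (w : ℝ) :
    sin (4 * arctan w) = 4 * w * (1 - w ^ 2) / (1 + w ^ 2) ^ 2 := by
  have hsq : √(1 + w ^ 2) ^ 2 = 1 + w ^ 2 := sq_sqrt (by positivity)
  rw [show (4 : ℝ) * arctan w = 2 * (2 * arctan w) by ring, sin_two_mul, cos_two_mul,
    sin_two_mul, sin_arctan, cos_arctan]
  field_simp
  linear_combination (-(4 * w * (1 - w ^ 2)) * √(1 + w ^ 2) ^ 2 - 8 * w * (1 + w ^ 2)) * hsq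

section KinkProfile

variable (x : ℝ)

/-- Since `x + √(x² + 1) = exp (arsinh x)`, this is the sine-Gordon kink `4 arctan (exp t)`
at `t = arsinh x`. -/
noncomputable def kinkProfile : ℝ := 4 * arctan (x + √(x ^ 2 + 1))

lemma add_sqrt_sq_add_one_pos : 0 < x + √(x ^ 2 + 1) := by
  have hsq : √(x ^ 2 + 1) ^ 2 = x ^ 2 + 1 := sq_sqrt (by positivity)
  nlinarith [sqrt_nonneg (x ^ 2 + 1)]

lemma one_add_sq_add_sqrt_sq_add_one :
    1 + (x + √(x ^ 2 + 1)) ^ 2 = 2 * √(x ^ 2 + 1) * (x + √(x ^ 2 + 1)) := by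
  linear_combination -sq_sqrt (by positivity : (0 : ℝ) ≤ x ^ 2 + 1)

lemma one_sub_sq_add_sqrt_sq_add_one :
    1 - (x + √(x ^ 2 + 1)) ^ 2 = -(2 * x * (x + √(x ^ 2 + 1))) := by
  linear_combination -sq_sqrt (by positivity : (0 : ℝ) ≤ x ^ 2 + 1)

lemma sin_kinkProfile : sin (kinkProfile x) = -2 * x / (x ^ 2 + 1) := by
  have hss : √(x ^ 2 + 1) ^ 2 = x ^ 2 + 1 := sq_sqrt (by positivity)
  have hw := add_sqrt_sq_add_one_pos x
  rw [kinkProfile, sin_four_mul_arctan, one_add_sq_add_sqrt_sq_add_one,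
    one_sub_sq_add_sqrt_sq_add_one, div_eq_div_iff (by positivity) (by positivity)]
  linear_combination 8 * x * (x + √(x ^ 2 + 1)) ^ 2 * hss

lemma hasDerivAt_add_sqrt_sq_add_one :
    HasDerivAt (fun t => t + √(t ^ 2 + 1)) ((x + √(x ^ 2 + 1)) / √(x ^ 2 + 1)) x := by
  have hs : 0 < √(x ^ 2 + 1) := sqrt_pos.2 (by positivity)
  refine ((hasDerivAt_id' x).add
    (((hasDerivAt_pow 2 x).add_const 1).sqrt (by positivity))).congr_deriv ?_
  field_simp
  ring

lemma hasDerivAt_kinkProfile : HasDerivAt kinkProfile (2 / (x ^ 2 + 1)) x := by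
  have hw := add_sqrt_sq_add_one_pos x
  have hss : √(x ^ 2 + 1) ^ 2 = x ^ 2 + 1 := sq_sqrt (by positivity)
  refine ((hasDerivAt_add_sqrt_sq_add_one x).arctan.const_mul 4).congr_deriv ?_
  rw [one_add_sq_add_sqrt_sq_add_one]
  field_simp
  linear_combination -4 * hss

end KinkProfile

lemma HasDerivAt.kinkProfile {y : ℝ → ℝ} {y' ξ : ℝ} (hy : HasDerivAt y y' ξ) :
    HasDerivAt (fun t => kinkProfile (y t)) (2 * y' / (y ξ ^ 2 + 1)) ξ :=
  ((hasDerivAt_kinkProfile (y ξ)).comp ξ hy).congr_deriv (by ring)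

lemma riccati_iff (γ Y Y' : ℝ) :
    2 * Y' / (Y ^ 2 + 1) = -2 * Y / (Y ^ 2 + 1) - γ ↔ Y' = -(Y + γ / 2 * (1 + Y ^ 2)) := by
  have hpos : 0 < Y ^ 2 + 1 := by positivity
  rw [div_sub' hpos.ne', div_left_inj' hpos.ne']
  constructor
  · intro h
    linear_combination h / 2
  · intro h
    linear_combination 2 * h

/-- Let I = (a,b) be an open interval, y : I → ℝ differentiable and
U(ξ) = 4 arctan(y(ξ) + √(y(ξ)² + 1)). Then U' = sin U − γ on I iff y satisfies the
Riccati equation y' = −(y + (γ/2)(1 + y²)) on I. -/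
theorem stmt11 (γ a b : ℝ) (y : ℝ → ℝ)
    (hy : ∀ ξ ∈ Set.Ioo a b, DifferentiableAt ℝ y ξ)
    (U : ℝ → ℝ)
    (hU : ∀ ξ : ℝ, U ξ = 4 * Real.arctan (y ξ + Real.sqrt ((y ξ) ^ 2 + 1))) :
    (∀ ξ ∈ Set.Ioo a b, deriv U ξ = Real.sin (U ξ) - γ) ↔
    (∀ ξ ∈ Set.Ioo a b, deriv y ξ = -(y ξ + γ / 2 * (1 + (y ξ) ^ 2))) := by
  obtain rfl : U = fun t => kinkProfile (y t) := funext hU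
  refine forall₂_congr fun ξ hξ => ?_
  rw [(hy ξ hξ).hasDerivAt.kinkProfile.deriv, sin_kinkProfile]
  exact riccati_iff γ (y ξ) (deriv y ξ)
end

section
/- Let K, δ, c > 0 with K ≠ δ, let T > 0, and let S : [0,T] → ℝ be continuous with 0 ≤ S(t) ≤ K ∫₀ᵗ e^{−δ(t−τ)} (S(τ) + c) dτ for all t ∈ [0,T]. Then S(t) ≤ (Kc/(K − δ)) (e^{(K−δ)t} − 1) for all t ∈ [0,T]; in particular, if K < δ then S(t) ≤ (Kc/(δ − K))(1 − e^{−(δ−K)t}) ≤ Kc/(δ − K), a bound uniform in t. -/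
/-!
The damped integral `u t = ∫₀ᵗ e^{-δ(t-τ)} (S τ + c) dτ` solves `u' = S + c - δ u` with
`u 0 = 0`. The hypothesis `S ≤ K u` turns this into the linear differential inequality
`u' ≤ (K - δ) u + c`, so Grönwall's lemma bounds `u` by `c / (K - δ) (e^{(K-δ)t} - 1)`, and
`S ≤ K u` transfers the bound to `S`. For `K < δ` the exponent is negative, which makes the
bound uniform in `t`.
-/

open Set Filter Topology Real

section DampedPrimitive

variable {f g : ℝ → ℝ} {a b t δ : ℝ}

theorem ContinuousOn.hasDerivWithinAt_primitive_Ici (hf : ContinuousOn f (Icc a b))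
    (ht : t ∈ Ico a b) : HasDerivWithinAt (fun u => ∫ x in a..u, f x) (f t) (Ici t) t := by
  have hIcc : Icc a b ∈ 𝓝[>] t := Icc_mem_nhdsGT_of_mem ht
  refine intervalIntegral.integral_hasDerivWithinAt_right ?_ ?_ ?_
  · exact (hf.mono (Icc_subset_Icc_right ht.2.le)).intervalIntegrable_of_Icc ht.1
  · exact (hf.stronglyMeasurableAtFilter_nhdsWithin measurableSet_Icc t).filter_mono
      (nhdsWithin_le_of_mem hIcc)
  · exact (hf.continuousWithinAt (Ico_subset_Icc_self ht)).mono_of_mem_nhdsWithin hIcc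

theorem integral_exp_neg_mul_sub_mul (δ a s : ℝ) (g : ℝ → ℝ) :
    ∫ τ in a..s, exp (-δ * (s - τ)) * g τ =
      exp (-δ * s) * ∫ τ in a..s, exp (δ * τ) * g τ := by
  rw [← intervalIntegral.integral_const_mul]
  congr 1 with τ
  rw [← mul_assoc, ← exp_add]
  ring_nf

theorem ContinuousOn.continuousOn_integral_exp_neg_mul_sub_mul (hg : ContinuousOn g (Icc a b)) :
    ContinuousOn (fun s => ∫ τ in a..s, exp (-δ * (s - τ)) * g τ) (Icc a b) := by
  simp_rw [integral_exp_neg_mul_sub_mul]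
  refine (continuous_exp.comp (continuous_const_mul _)).continuousOn.mul ?_
  rcases le_or_gt a b with hab | hba
  · have hint : IntervalIntegrable (fun τ => exp (δ * τ) * g τ) MeasureTheory.volume a b :=
      ((continuous_exp.comp (continuous_const_mul _)).continuousOn.mul hg).intervalIntegrable_of_Icc
        hab
    exact (intervalIntegral.continuousOn_primitive_interval' hint left_mem_uIcc).mono
      Icc_subset_uIcc
  · simp [Icc_eq_empty_of_lt hba]

theorem ContinuousOn.hasDerivWithinAt_integral_exp_neg_mul_sub_mul
    (hg : ContinuousOn g (Icc a b)) (ht : t ∈ Ico a b) :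
    HasDerivWithinAt (fun s => ∫ τ in a..s, exp (-δ * (s - τ)) * g τ)
      (g t - δ * ∫ τ in a..t, exp (-δ * (t - τ)) * g τ) (Ici t) t := by
  have hP : HasDerivWithinAt (fun s => ∫ τ in a..s, exp (δ * τ) * g τ) (exp (δ * t) * g t)
      (Ici t) t :=
    ((continuous_exp.comp (continuous_const_mul δ)).continuousOn.mul
      hg).hasDerivWithinAt_primitive_Ici ht
  have hE : HasDerivWithinAt (fun s => exp (-δ * s)) (-δ * exp (-δ * t)) (Ici t) t := by
    simpa [mul_comm] using ((hasDerivAt_id t).const_mul (-δ)).exp.hasDerivWithinAt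
  simp_rw [integral_exp_neg_mul_sub_mul]
  refine (hE.mul hP).congr_deriv ?_
  have : exp (-δ * t) * exp (δ * t) = 1 := by rw [← exp_add]; simp
  linear_combination g t * this

end DampedPrimitive

theorem le_mul_gronwallBound_of_le_integral_exp_neg_mul_sub_mul {S : ℝ → ℝ} {K δ c a b : ℝ}
    (hK : 0 ≤ K) (hS : ContinuousOn S (Icc a b))
    (hbd : ∀ t ∈ Icc a b, S t ≤ K * ∫ τ in a..t, exp (-δ * (t - τ)) * (S τ + c)) :
    ∀ t ∈ Icc a b, S t ≤ K * gronwallBound 0 (K - δ) c (t - a) := by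
  set u := fun t => ∫ τ in a..t, exp (-δ * (t - τ)) * (S τ + c)
  have hSc : ContinuousOn (fun τ => S τ + c) (Icc a b) := hS.add continuousOn_const
  have hu_le : ∀ t ∈ Icc a b, u t ≤ gronwallBound 0 (K - δ) c (t - a) :=
    le_gronwallBound_of_liminf_deriv_right_le hSc.continuousOn_integral_exp_neg_mul_sub_mul
      (fun t ht _ hr =>
        (hSc.hasDerivWithinAt_integral_exp_neg_mul_sub_mul ht).liminf_right_slope_le hr)
      (by simp [u]) (fun t ht => by linarith [hbd t (Ico_subset_Icc_self ht)])
  exact fun t ht => (hbd t ht).trans (mul_le_mul_of_nonneg_left (hu_le t ht) hK)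

theorem stmt17_general (K δ c T : ℝ) (hK : 0 < K) (hc : 0 < c) (hKδ : K ≠ δ)
    (S : ℝ → ℝ) (hS : ContinuousOn S (Set.Icc 0 T))
    (hbd : ∀ t ∈ Set.Icc (0 : ℝ) T,
      S t ≤ K * ∫ τ in (0 : ℝ)..t, Real.exp (-δ * (t - τ)) * (S τ + c)) :
    ∀ t ∈ Set.Icc (0 : ℝ) T,
      S t ≤ (K * c / (K - δ)) * (Real.exp ((K - δ) * t) - 1) ∧
      (K < δ →
        S t ≤ (K * c / (δ - K)) * (1 - Real.exp (-(δ - K) * t)) ∧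
        S t ≤ K * c / (δ - K)) := by
  intro t ht
  have hgron := le_mul_gronwallBound_of_le_integral_exp_neg_mul_sub_mul hK.le hS hbd t ht
  rw [sub_zero, gronwallBound_of_K_ne_0 (sub_ne_zero.2 hKδ)] at hgron
  have hmain : S t ≤ (K * c / (K - δ)) * (Real.exp ((K - δ) * t) - 1) :=
    hgron.trans_eq (by ring)
  refine ⟨hmain, fun hlt => ?_⟩
  have hflip : (K * c / (K - δ)) * (Real.exp ((K - δ) * t) - 1)
      = (K * c / (δ - K)) * (1 - Real.exp (-(δ - K) * t)) := by
    rw [neg_sub, ← neg_sub δ K, div_neg]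
    ring
  have hdecay := hmain.trans_eq hflip
  refine ⟨hdecay, hdecay.trans (mul_le_of_le_one_right ?_ (sub_le_self _ (exp_pos _).le))⟩
  exact div_nonneg (mul_pos hK hc).le (sub_pos.2 hlt).le

/-- Gronwall-type estimate. Let K, δ, c > 0 with K ≠ δ, T > 0, and let
S : [0,T] → ℝ be continuous with 0 ≤ S(t) ≤ K ∫₀ᵗ e^{−δ(t−τ)}(S(τ) + c) dτ on [0,T].
Then S(t) ≤ (Kc/(K−δ))(e^{(K−δ)t} − 1) on [0,T]; in particular if K < δ then
S(t) ≤ (Kc/(δ−K))(1 − e^{−(δ−K)t}) ≤ Kc/(δ−K). -/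
theorem stmt17 (K δ c T : ℝ) (hK : 0 < K) (hδ : 0 < δ) (hc : 0 < c) (hKδ : K ≠ δ)
    (hT : 0 < T) (S : ℝ → ℝ) (hS : ContinuousOn S (Set.Icc 0 T))
    (hpos : ∀ t ∈ Set.Icc (0 : ℝ) T, 0 ≤ S t)
    (hbd : ∀ t ∈ Set.Icc (0 : ℝ) T,
      S t ≤ K * ∫ τ in (0 : ℝ)..t, Real.exp (-δ * (t - τ)) * (S τ + c)) :
    ∀ t ∈ Set.Icc (0 : ℝ) T,
      S t ≤ (K * c / (K - δ)) * (Real.exp ((K - δ) * t) - 1) ∧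
      (K < δ →
        S t ≤ (K * c / (δ - K)) * (1 - Real.exp (-(δ - K) * t)) ∧
        S t ≤ K * c / (δ - K)) :=
  stmt17_general K δ c T hK hc hKδ S hS hbd
end
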